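/- If H1 and H2 are simple finite hypergraphs, then their strong product H1⊠̂H2 is a simple hypergraph. -/

import Mathlib

/-!
Basic definitions: finite hypergraphs (a finite nonempty vertex set `V`, given by
`[Fintype V] [Nonempty V]`, together with a set of nonempty edges), walks, distance,
connectedness, simplicity, rank, colorings, Helly property, covers,
the various hypergraph products, 2-sections, and graph products.
-/

/-- A hypergraph on a vertex type `V`: a collection of nonempty edges (finite subsets of `V`). -/
structure FinHypergraph (V : Type*) where
  edges : Set (Finset V)
  nonempty_edges : ∀ e ∈ edges, e.Nonempty

namespace FinHypergraph

variable {V V₁ V₂ : Type*}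

/-- There is a walk of length `n` from `u` to `v`: a sequence of vertices `w 0, …, w n`
and edges `f 1, …, f n` with consecutive vertices distinct and both contained
in the corresponding edge. -/
def HasWalk (H : FinHypergraph V) (u v : V) (n : ℕ) : Prop :=
  ∃ (w : Fin (n + 1) → V) (f : Fin n → Finset V),
    w 0 = u ∧ w (Fin.last n) = v ∧
      ∀ i : Fin n, f i ∈ H.edges ∧ w i.castSucc ≠ w i.succ ∧
        w i.castSucc ∈ f i ∧ w i.succ ∈ f i

/-- The distance between two vertices: the minimum length of a walk joining them,
`⊤ = ∞` if there is none. -/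
noncomputable def dist (H : FinHypergraph V) (u v : V) : ℕ∞ :=
  sInf {x : ℕ∞ | ∃ n : ℕ, x = n ∧ H.HasWalk u v n}

/-- A hypergraph is connected if any two vertices are joined by a walk. -/
def Connected (H : FinHypergraph V) : Prop := ∀ u v : V, ∃ n, H.HasWalk u v n

/-- A hypergraph is simple if every edge has at least two vertices and
no edge is contained in another edge. -/
def Simple (H : FinHypergraph V) : Prop :=
  (∀ e ∈ H.edges, 2 ≤ e.card) ∧ ∀ e ∈ H.edges, ∀ f ∈ H.edges, e ⊆ f → e = f

/-- A hypergraph is loopless if every edge has at least two vertices. -/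
def Loopless (H : FinHypergraph V) : Prop := ∀ e ∈ H.edges, 2 ≤ e.card

/-- The rank: the maximum cardinality of an edge. -/
noncomputable def rank (H : FinHypergraph V) : ℕ := sSup (Finset.card '' H.edges)

/-- The anti-rank: the minimum cardinality of an edge. -/
noncomputable def antirank (H : FinHypergraph V) : ℕ := sInf (Finset.card '' H.edges)

/-- A proper coloring: no color class contains an edge. -/
def IsProperColoring (H : FinHypergraph V) {k : ℕ} (c : V → Fin k) : Prop :=
  ∀ e ∈ H.edges, ∀ i : Fin k, ¬ ∀ v ∈ e, c v = i

/-- A proper strong coloring: a proper coloring in which the vertices of every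
edge receive pairwise distinct colors. -/
def IsStrongColoring (H : FinHypergraph V) {k : ℕ} (c : V → Fin k) : Prop :=
  H.IsProperColoring c ∧ ∀ e ∈ H.edges, ∀ u ∈ e, ∀ v ∈ e, u ≠ v → c u ≠ c v

/-- The chromatic number: the least `k` admitting a proper `k`-coloring. -/
noncomputable def chromaticNumber (H : FinHypergraph V) : ℕ :=
  sInf {k : ℕ | ∃ c : V → Fin k, H.IsProperColoring c}

/-- The strong chromatic number: the least `k` admitting a proper strong `k`-coloring. -/
noncomputable def strongChromaticNumber (H : FinHypergraph V) : ℕ :=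
  sInf {k : ℕ | ∃ c : V → Fin k, H.IsStrongColoring c}

/-- The Helly property: every intersecting family of edges is a star. -/
def Helly (H : FinHypergraph V) : Prop :=
  ∀ E' ⊆ H.edges, (∀ e ∈ E', ∀ f ∈ E', ∃ x, x ∈ e ∧ x ∈ f) → ∃ v, ∀ e ∈ E', v ∈ e

/-- The covering number: the minimum cardinality of a set of vertices meeting every edge. -/
noncomputable def coverNumber (H : FinHypergraph V) : ℕ :=
  sInf {k : ℕ | ∃ T : Finset V, T.card = k ∧ ∀ e ∈ H.edges, ∃ v ∈ T, v ∈ e}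

/-- The Cartesian product of hypergraphs. -/
def cartProd (H₁ : FinHypergraph V₁) (H₂ : FinHypergraph V₂) : FinHypergraph (V₁ × V₂) where
  edges := {E | (∃ x, ∃ f ∈ H₂.edges, E = {x} ×ˢ f) ∨ ∃ e ∈ H₁.edges, ∃ y, E = e ×ˢ {y}}
  nonempty_edges := by
    rintro E (⟨x, f, hf, rfl⟩ | ⟨e, he, y, rfl⟩)
    · exact (Finset.singleton_nonempty x).product (H₂.nonempty_edges f hf)
    · exact (H₁.nonempty_edges e he).product (Finset.singleton_nonempty y)

section Products

variable [DecidableEq V₁] [DecidableEq V₂]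

/-- The minimal-rank-preserving direct product `H₁ ×̌ H₂`. -/
def minDirProd (H₁ : FinHypergraph V₁) (H₂ : FinHypergraph V₂) : FinHypergraph (V₁ × V₂) where
  edges := {E | ∃ e₁ ∈ H₁.edges, ∃ e₂ ∈ H₂.edges,
    E ⊆ e₁ ×ˢ e₂ ∧ E.card = min e₁.card e₂.card ∧
      (E.image Prod.fst).card = min e₁.card e₂.card ∧
      (E.image Prod.snd).card = min e₁.card e₂.card}
  nonempty_edges := by
    rintro E ⟨e₁, h₁, e₂, h₂, -, hc, -, -⟩
    rw [← Finset.card_pos, hc]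
    exact lt_min (Finset.card_pos.mpr (H₁.nonempty_edges e₁ h₁))
      (Finset.card_pos.mpr (H₂.nonempty_edges e₂ h₂))

/-- The maximal-rank-preserving direct product `H₁ ×̂ H₂`. -/
def maxDirProd (H₁ : FinHypergraph V₁) (H₂ : FinHypergraph V₂) : FinHypergraph (V₁ × V₂) where
  edges := {E | ∃ e₁ ∈ H₁.edges, ∃ e₂ ∈ H₂.edges,
    E ⊆ e₁ ×ˢ e₂ ∧ E.card = max e₁.card e₂.card ∧
      E.image Prod.fst = e₁ ∧ E.image Prod.snd = e₂}
  nonempty_edges := by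
    rintro E ⟨e₁, h₁, e₂, h₂, -, hc, -, -⟩
    rw [← Finset.card_pos, hc]
    exact lt_max_iff.mpr (Or.inl (Finset.card_pos.mpr (H₁.nonempty_edges e₁ h₁)))

/-- The non-rank-preserving direct product `H₁ ×̃ H₂`. -/
def nrDirProd (H₁ : FinHypergraph V₁) (H₂ : FinHypergraph V₂) : FinHypergraph (V₁ × V₂) where
  edges := {E | ∃ e ∈ H₁.edges, ∃ f ∈ H₂.edges, ∃ x ∈ e, ∃ y ∈ f,
    E = insert (x, y) ((e.erase x) ×ˢ (f.erase y))}
  nonempty_edges := by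
    rintro E ⟨e, -, f, -, x, -, y, -, rfl⟩
    exact Finset.insert_nonempty _ _

/-- The normal product `H₁ ⊠̌ H₂`: union of the Cartesian product edges and the
minimal-rank-preserving direct product edges. -/
def normalProd (H₁ : FinHypergraph V₁) (H₂ : FinHypergraph V₂) : FinHypergraph (V₁ × V₂) where
  edges := (H₁.cartProd H₂).edges ∪ (H₁.minDirProd H₂).edges
  nonempty_edges := by
    rintro E (h | h)
    · exact (H₁.cartProd H₂).nonempty_edges E h
    · exact (H₁.minDirProd H₂).nonempty_edges E h

/-- The strong product `H₁ ⊠̂ H₂`: union of the Cartesian product edges and the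
maximal-rank-preserving direct product edges. -/
def strongProd (H₁ : FinHypergraph V₁) (H₂ : FinHypergraph V₂) : FinHypergraph (V₁ × V₂) where
  edges := (H₁.cartProd H₂).edges ∪ (H₁.maxDirProd H₂).edges
  nonempty_edges := by
    rintro E (h | h)
    · exact (H₁.cartProd H₂).nonempty_edges E h
    · exact (H₁.maxDirProd H₂).nonempty_edges E h

/-- The lexicographic product `H₁ ∘ H₂`. -/
def lexProd (H₁ : FinHypergraph V₁) (H₂ : FinHypergraph V₂) : FinHypergraph (V₁ × V₂) where
  edges := {E | (E.image Prod.fst ∈ H₁.edges ∧ (E.image Prod.fst).card = E.card) ∨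
    ∃ x, ∃ e₂ ∈ H₂.edges, E = {x} ×ˢ e₂}
  nonempty_edges := by
    rintro E (⟨h₁, hc⟩ | ⟨x, e₂, h₂, rfl⟩)
    · rw [← Finset.card_pos, ← hc]
      exact Finset.card_pos.mpr (H₁.nonempty_edges _ h₁)
    · exact (Finset.singleton_nonempty x).product (H₂.nonempty_edges e₂ h₂)

end Products

/-- The square product `H₁ ■ H₂`. -/
def squareProd (H₁ : FinHypergraph V₁) (H₂ : FinHypergraph V₂) : FinHypergraph (V₁ × V₂) where
  edges := {E | ∃ e₁ ∈ H₁.edges, ∃ e₂ ∈ H₂.edges, E = e₁ ×ˢ e₂}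
  nonempty_edges := by
    rintro E ⟨e₁, h₁, e₂, h₂, rfl⟩
    exact (H₁.nonempty_edges e₁ h₁).product (H₂.nonempty_edges e₂ h₂)

/-- The 2-section of a hypergraph: distinct vertices are adjacent iff they lie
in a common edge. -/
def twoSection (H : FinHypergraph V) : SimpleGraph V where
  Adj x y := x ≠ y ∧ ∃ e ∈ H.edges, x ∈ e ∧ y ∈ e
  symm := ⟨by rintro x y ⟨hxy, e, he, hx, hy⟩; exact ⟨hxy.symm, e, he, hy, hx⟩⟩
  loopless := ⟨by rintro x ⟨hx, -⟩; exact hx rfl⟩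

end FinHypergraph

namespace SimpleGraph

variable {V₁ V₂ : Type*}

/-- The direct (tensor) product of simple graphs. -/
def directProd (G₁ : SimpleGraph V₁) (G₂ : SimpleGraph V₂) : SimpleGraph (V₁ × V₂) where
  Adj x y := G₁.Adj x.1 y.1 ∧ G₂.Adj x.2 y.2
  symm := ⟨fun _ _ ⟨h₁, h₂⟩ => ⟨h₁.symm, h₂.symm⟩⟩
  loopless := ⟨fun x h => G₁.loopless.irrefl x.1 h.1⟩

/-- The strong product of simple graphs. -/
def strongGraphProd (G₁ : SimpleGraph V₁) (G₂ : SimpleGraph V₂) : SimpleGraph (V₁ × V₂) where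
  Adj x y := x ≠ y ∧ ((x.1 = y.1 ∧ G₂.Adj x.2 y.2) ∨ (x.2 = y.2 ∧ G₁.Adj x.1 y.1) ∨
    (G₁.Adj x.1 y.1 ∧ G₂.Adj x.2 y.2))
  symm := ⟨by
    rintro x y ⟨hne, (⟨h, h'⟩ | ⟨h, h'⟩ | ⟨h, h'⟩)⟩
    · exact ⟨hne.symm, Or.inl ⟨h.symm, h'.symm⟩⟩
    · exact ⟨hne.symm, Or.inr (Or.inl ⟨h.symm, h'.symm⟩)⟩
    · exact ⟨hne.symm, Or.inr (Or.inr ⟨h.symm, h'.symm⟩)⟩⟩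
  loopless := ⟨by rintro x ⟨hx, -⟩; exact hx rfl⟩

/-- The lexicographic product of simple graphs. -/
def lexGraphProd (G₁ : SimpleGraph V₁) (G₂ : SimpleGraph V₂) : SimpleGraph (V₁ × V₂) where
  Adj x y := G₁.Adj x.1 y.1 ∨ (x.1 = y.1 ∧ G₂.Adj x.2 y.2)
  symm := ⟨by
    rintro x y (h | ⟨h, h'⟩)
    · exact Or.inl h.symm
    · exact Or.inr ⟨h.symm, h'.symm⟩⟩
  loopless := ⟨by
    rintro x (h | ⟨-, h⟩)
    · exact G₁.loopless.irrefl x.1 h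
    · exact G₂.loopless.irrefl x.2 h⟩

end SimpleGraph

/-!
Both the Cartesian and the maximal-rank-preserving direct product of simple hypergraphs are
simple, and an inclusion between edges projects to inclusions between edges of the factors.
What remains is to rule out inclusions between a Cartesian edge and a direct edge. A direct
edge projects onto an edge `e₁` of `H₁`, so it lies in no fibre `{x} × f`. Conversely, if a
direct edge `F` with projections `e₁, e₂` contained `{x} × f`, then `f = e₂` by simplicity of
`H₂`, and `F` would have `|e₂|` points over `x` and a point over each other vertex of `e₁`:
`|F| ≥ |e₁| + |e₂| - 1 > max |e₁| |e₂|`.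
-/

open Finset

namespace Finset

theorem card_add_card_image_erase_le {α β : Type*} [DecidableEq β] {s t : Finset α}
    {g : α → β} {b : β} (hts : t ⊆ s) (hb : ∀ a ∈ t, g a = b) :
    #t + #((s.image g).erase b) ≤ #s := by
  classical
  have hfiber : t ⊆ s.filter (g · = b) := fun a ha => mem_filter.mpr ⟨hts ha, hb a ha⟩
  have hrest : (s.image g).erase b = (s.filter (g · ≠ b)).image g := by
    rw [← filter_ne', filter_image]
  calc #t + #((s.image g).erase b)
      ≤ #(s.filter (g · = b)) + #(s.filter (g · ≠ b)) := by
        rw [hrest]; exact add_le_add (card_le_card hfiber) card_image_le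
    _ = #s := card_filter_add_card_filter_not _

theorem subset_and_subset_of_product_subset_product {α β : Type*} [DecidableEq α]
    [DecidableEq β] {s s' : Finset α} {t t' : Finset β} (hs : s.Nonempty) (ht : t.Nonempty)
    (h : s ×ˢ t ⊆ s' ×ˢ t') : s ⊆ s' ∧ t ⊆ t' :=
  ⟨(product_image_fst ht).symm.subset.trans
      ((image_subset_image h).trans subset_product_image_fst),
    (product_image_snd hs).symm.subset.trans
      ((image_subset_image h).trans subset_product_image_snd)⟩

end Finset

namespace FinHypergraph

variable {V V₁ V₂ : Type*}

theorem simple_iff {H : FinHypergraph V} :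
    H.Simple ↔ H.Loopless ∧ IsAntichain (· ⊆ ·) H.edges := by
  refine and_congr_right' (forall₂_congr fun e _ => forall₂_congr fun f _ => ?_)
  exact ⟨fun h hne hef => hne (h hef), fun h hef => by_contra fun hne => h hne hef⟩

theorem Loopless.cartProd {H₁ : FinHypergraph V₁} {H₂ : FinHypergraph V₂}
    (h₁ : H₁.Loopless) (h₂ : H₂.Loopless) : (H₁.cartProd H₂).Loopless := by
  rintro E (⟨x, f, hf, rfl⟩ | ⟨e, he, y, rfl⟩)
  · simpa [card_product] using h₂ f hf
  · simpa [card_product] using h₁ e he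

section Products

variable [DecidableEq V₁] [DecidableEq V₂] {H₁ : FinHypergraph V₁} {H₂ : FinHypergraph V₂}

theorem isAntichain_cartProd (h₁ : H₁.Simple) (h₂ : H₂.Simple) :
    IsAntichain (· ⊆ ·) (H₁.cartProd H₂).edges := by
  have hne₁ := H₁.nonempty_edges
  have hne₂ := H₂.nonempty_edges
  rintro E (⟨x, f, hf, rfl⟩ | ⟨e, he, y, rfl⟩) F (⟨x', f', hf', rfl⟩ | ⟨e', he', y', rfl⟩) hne hEF
  · obtain ⟨hx, hff'⟩ := subset_and_subset_of_product_subset_product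
      (singleton_nonempty x) (hne₂ f hf) hEF
    rw [singleton_subset_singleton.mp hx, h₂.2 f hf f' hf' hff'] at hne
    exact hne rfl
  · have hfy := card_le_card (subset_and_subset_of_product_subset_product
      (singleton_nonempty x) (hne₂ f hf) hEF).2
    have := h₂.1 f hf
    rw [card_singleton] at hfy
    omega
  · have hex := card_le_card (subset_and_subset_of_product_subset_product
      (hne₁ e he) (singleton_nonempty y) hEF).1
    have := h₁.1 e he
    rw [card_singleton] at hex
    omega
  · obtain ⟨hee', hy⟩ := subset_and_subset_of_product_subset_product
      (hne₁ e he) (singleton_nonempty y) hEF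
    rw [singleton_subset_singleton.mp hy, h₁.2 e he e' he' hee'] at hne
    exact hne rfl

theorem Loopless.maxDirProd (h₁ : H₁.Loopless) : (H₁.maxDirProd H₂).Loopless := by
  rintro E ⟨e₁, he₁, e₂, -, -, hcard, -, -⟩
  exact hcard ▸ le_max_of_le_left (h₁ e₁ he₁)

theorem Loopless.strongProd (h₁ : H₁.Loopless) (h₂ : H₂.Loopless) :
    (H₁.strongProd H₂).Loopless := by
  rintro E (hE | hE)
  exacts [h₁.cartProd h₂ E hE, h₁.maxDirProd E hE]

theorem isAntichain_maxDirProd (h₁ : IsAntichain (· ⊆ ·) H₁.edges)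
    (h₂ : IsAntichain (· ⊆ ·) H₂.edges) : IsAntichain (· ⊆ ·) (H₁.maxDirProd H₂).edges := by
  rintro E ⟨e₁, he₁, e₂, he₂, -, hE, rfl, rfl⟩ F ⟨f₁, hf₁, f₂, hf₂, -, hF, rfl, rfl⟩ hne hEF
  have hfst := h₁.eq he₁ hf₁ (image_subset_image hEF)
  have hsnd := h₂.eq he₂ hf₂ (image_subset_image hEF)
  exact hne (eq_of_subset_of_card_le hEF (by rw [hE, hF, hfst, hsnd]))

theorem not_subset_cartProd_of_mem_maxDirProd (h₁ : H₁.Loopless) (h₂ : H₂.Loopless)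
    {E F : Finset (V₁ × V₂)} (hE : E ∈ (H₁.maxDirProd H₂).edges)
    (hF : F ∈ (H₁.cartProd H₂).edges) : ¬ E ⊆ F := by
  obtain ⟨e₁, he₁, e₂, he₂, -, -, rfl, rfl⟩ := hE
  intro hEF
  rcases hF with ⟨x, f, -, rfl⟩ | ⟨e, -, y, rfl⟩
  · have hx := card_le_card ((image_subset_image hEF).trans subset_product_image_fst)
    have := h₁ _ he₁
    rw [card_singleton] at hx
    omega
  · have hy := card_le_card ((image_subset_image hEF).trans subset_product_image_snd)
    have := h₂ _ he₂
    rw [card_singleton] at hy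
    omega

theorem not_subset_maxDirProd_of_mem_cartProd (h₁ : H₁.Simple) (h₂ : H₂.Simple)
    {E F : Finset (V₁ × V₂)} (hE : E ∈ (H₁.cartProd H₂).edges)
    (hF : F ∈ (H₁.maxDirProd H₂).edges) : ¬ E ⊆ F := by
  obtain ⟨e₁, he₁, e₂, he₂, hFsub, hF, hF₁, hF₂⟩ := hF
  have := h₁.1 _ he₁
  have := h₂.1 _ he₂
  intro hEF
  rcases hE with ⟨x, f, hf, rfl⟩ | ⟨e, he, y, rfl⟩
  · obtain ⟨hx, hfe₂⟩ := subset_and_subset_of_product_subset_product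
      (singleton_nonempty x) (H₂.nonempty_edges f hf) (hEF.trans hFsub)
    have hcount := card_add_card_image_erase_le hEF (g := Prod.fst) (b := x)
      fun a ha => mem_singleton.mp (mem_product.mp ha).1
    rw [card_product, card_singleton, one_mul, hF₁, card_erase_of_mem (singleton_subset_iff.mp hx),
      h₂.2 f hf e₂ he₂ hfe₂, hF] at hcount
    omega
  · obtain ⟨hee₁, hy⟩ := subset_and_subset_of_product_subset_product
      (H₁.nonempty_edges e he) (singleton_nonempty y) (hEF.trans hFsub)
    have hcount := card_add_card_image_erase_le hEF (g := Prod.snd) (b := y)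
      fun a ha => mem_singleton.mp (mem_product.mp ha).2
    rw [card_product, card_singleton, mul_one, hF₂, card_erase_of_mem (singleton_subset_iff.mp hy),
      h₁.2 e he e₁ he₁ hee₁, hF] at hcount
    omega

end Products

end FinHypergraph

open FinHypergraph in
theorem simple_strongProd_general {V₁ V₂ : Type*} [DecidableEq V₁]
    [DecidableEq V₂] (H₁ : FinHypergraph V₁) (H₂ : FinHypergraph V₂)
    (h₁ : H₁.Simple) (h₂ : H₂.Simple) :
    (H₁.strongProd H₂).Simple := by
  obtain ⟨hl₁, ha₁⟩ := simple_iff.mp h₁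
  obtain ⟨hl₂, ha₂⟩ := simple_iff.mp h₂
  refine simple_iff.mpr ⟨hl₁.strongProd hl₂, isAntichain_union.mpr
    ⟨isAntichain_cartProd h₁ h₂, isAntichain_maxDirProd ha₁ ha₂, fun E hE F hF _ => ?_⟩⟩
  exact ⟨not_subset_maxDirProd_of_mem_cartProd h₁ h₂ hE hF,
    not_subset_cartProd_of_mem_maxDirProd hl₁ hl₂ hF hE⟩

/-- the strong product of simple hypergraphs is simple. -/
theorem simple_strongProd {V₁ V₂ : Type*} [Fintype V₁] [Nonempty V₁] [DecidableEq V₁]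
    [Fintype V₂] [Nonempty V₂] [DecidableEq V₂] (H₁ : FinHypergraph V₁) (H₂ : FinHypergraph V₂)
    (h₁ : H₁.Simple) (h₂ : H₂.Simple) :
    (H₁.strongProd H₂).Simple :=
  simple_strongProd_general H₁ H₂ h₁ h₂
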